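/- In the expansion BD^{→,⊥,C,D} of Belnap–Dunn logic with the consistency connective C and the determinedness connective D, for every valuation ν: ν(Cp) = ν((p ∧ ¬p) → ⊥) and ν(Dp) = ν(¬((p ∨ ¬p) → ⊥)). Consequently C is definable in terms of {¬, ∧, →, ⊥} and D is definable in terms of {¬, ∨, →, ⊥}. -/
import Mathlib


namespace BD11

/-- The four truth values of Belnap-Dunn logic:
`t` (true), `f` (false), `b` (both true and false), `n` (neither true nor false). -/
inductive V4 : Type
  | t | f | b | n
deriving DecidableEq, Repr

namespace V4

/-- `a` lies above truth in the Belnap-Dunn bilattice (i.e. `a ∈ {t, b}`). -/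
def hasT : V4 → Bool
  | t => true
  | b => true
  | _ => false

/-- `a` lies above falsity in the Belnap-Dunn bilattice (i.e. `a ∈ {f, b}`). -/
def hasF : V4 → Bool
  | f => true
  | b => true
  | _ => false

def ofTF : Bool → Bool → V4
  | true, true => b
  | true, false => t
  | false, true => f
  | false, false => n

/-- Interpretation of ¬: swaps `t` and `f`, fixes `b` and `n`. -/
def neg4 : V4 → V4
  | t => f
  | f => t
  | b => b
  | n => n

/-- Interpretation of ∧: greatest lower bound in the lattice order on `V4`
with `f` least, `t` greatest, `b` and `n` incomparable. -/
def and4 (x y : V4) : V4 := ofTF (x.hasT && y.hasT) (x.hasF || y.hasF)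

/-- Interpretation of ∨: least upper bound in the lattice order on `V4`
with `f` least, `t` greatest, `b` and `n` incomparable. -/
def or4 (x y : V4) : V4 := ofTF (x.hasT || y.hasT) (x.hasF && y.hasF)

/-- Interpretation of →: `a₁ → a₂ = t` if `a₁ ∉ {t, b}`, and `a₂` otherwise. -/
def imp4 (x y : V4) : V4 := if x = t ∨ x = b then y else t

/-- The designated truth values: `t` and `b`. -/
def desig (x : V4) : Prop := x = t ∨ x = b

end V4

/-- Interpretation of the consistency connective C:
`C(a) = t` if `a ∈ {t, f, n}` and `f` otherwise. -/
def consV (a : V4) : V4 := if a = V4.b then V4.f else V4.t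

/-- Interpretation of the determinedness connective D:
`D(a) = t` if `a ∈ {t, f, b}` and `f` otherwise. -/
def detV (a : V4) : V4 := if a = V4.n then V4.f else V4.t

/-- Formulas of the expansion BD^{→,⊥,C,D} of Belnap-Dunn logic. -/
inductive Fm : Type
  | var : ℕ → Fm
  | neg : Fm → Fm
  | and : Fm → Fm → Fm
  | or : Fm → Fm → Fm
  | imp : Fm → Fm → Fm
  | bot : Fm
  | cons : Fm → Fm
  | det : Fm → Fm
deriving DecidableEq

/-- The valuation in the matrix `M^{BD,→,⊥,C,D}` determined by an assignment of
truth values to the propositional variables. -/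
def val (v : ℕ → V4) : Fm → V4
  | .var p => v p
  | .neg A => V4.neg4 (val v A)
  | .and A B => V4.and4 (val v A) (val v B)
  | .or A B => V4.or4 (val v A) (val v B)
  | .imp A B => V4.imp4 (val v A) (val v B)
  | .bot => V4.f
  | .cons A => consV (val v A)
  | .det A => detV (val v A)

/-- A formula contains only the connectives ¬, ∧, →, ⊥. -/
def OnlyNegAndImpBot : Fm → Prop
  | .var _ => True
  | .neg A => OnlyNegAndImpBot A
  | .and A B => OnlyNegAndImpBot A ∧ OnlyNegAndImpBot B
  | .or _ _ => False
  | .imp A B => OnlyNegAndImpBot A ∧ OnlyNegAndImpBot B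
  | .bot => True
  | .cons _ => False
  | .det _ => False

/-- A formula contains only the connectives ¬, ∨, →, ⊥. -/
def OnlyNegOrImpBot : Fm → Prop
  | .var _ => True
  | .neg A => OnlyNegOrImpBot A
  | .and _ _ => False
  | .or A B => OnlyNegOrImpBot A ∧ OnlyNegOrImpBot B
  | .imp A B => OnlyNegOrImpBot A ∧ OnlyNegOrImpBot B
  | .bot => True
  | .cons _ => False
  | .det _ => False

/-- in BD^{→,⊥,C,D}, `Cp` is logically equivalent to
`(p ∧ ¬p) → ⊥` and `Dp` is logically equivalent to `¬((p ∨ ¬p) → ⊥)`;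
consequently C is definable in terms of {¬, ∧, →, ⊥} and D is definable in
terms of {¬, ∨, →, ⊥}. -/
theorem stmt11 :
    (∀ (p : ℕ) (v : ℕ → V4),
        val v (Fm.cons (Fm.var p)) =
          val v (Fm.imp (Fm.and (Fm.var p) (Fm.neg (Fm.var p))) Fm.bot)) ∧
    (∀ (p : ℕ) (v : ℕ → V4),
        val v (Fm.det (Fm.var p)) =
          val v (Fm.neg (Fm.imp (Fm.or (Fm.var p) (Fm.neg (Fm.var p))) Fm.bot))) ∧
    (∃ (p : ℕ) (A : Fm), OnlyNegAndImpBot A ∧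
        ∀ v : ℕ → V4, val v (Fm.cons (Fm.var p)) = val v A) ∧
    (∃ (p : ℕ) (A : Fm), OnlyNegOrImpBot A ∧
        ∀ v : ℕ → V4, val v (Fm.det (Fm.var p)) = val v A) := by
  refine ⟨fun p v => ?_, fun p v => ?_,
    ⟨0, Fm.imp (Fm.and (Fm.var 0) (Fm.neg (Fm.var 0))) Fm.bot, ⟨⟨trivial, trivial⟩, trivial⟩, fun v => ?_⟩,
    ⟨0, Fm.neg (Fm.imp (Fm.or (Fm.var 0) (Fm.neg (Fm.var 0))) Fm.bot), ⟨⟨trivial, trivial⟩, trivial⟩, fun v => ?_⟩⟩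
  all_goals first
    | (cases h : v p <;>
        simp [val, consV, detV, V4.neg4, V4.and4, V4.or4, V4.imp4, V4.ofTF, V4.hasT, V4.hasF, h])
    | (cases h : v 0 <;>
        simp [val, consV, detV, V4.neg4, V4.and4, V4.or4, V4.imp4, V4.ofTF, V4.hasT, V4.hasF, h])

end BD11
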